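/- arXiv:2208.04861 — 3 statements merged into one kernel-verified Lean document; each statement's English description precedes it below -/
import Mathlib

section
/- Let ξ, η ∈ ∂_hY with ‖b_ξ − b_η‖_∞ < ∞. If x_n → ξ and y_n → η are sequences in Y, then the geodesic segments between x_n and y_n exit every bounded set: for every z ∈ Y and every choice of geodesics γ_n from x_n to y_n one has d(z, γ_n) → ∞. In other words, every point of the horofunction boundary of a proper geodesic metric space is non-pinched. -/
open Metric Filter Topology Set MeasureTheory Pointwise

noncomputable section

namespace ConfDyn

/-- `γ` is (the image of) a geodesic segment from `x` to `y`. -/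
def IsGeodesicIn (Y : Type*) [MetricSpace Y] (γ : Set Y) (x y : Y) : Prop :=
  ∃ f : ℝ → Y, f 0 = x ∧ f (dist x y) = y ∧
    (∀ s ∈ Set.Icc (0 : ℝ) (dist x y), ∀ t ∈ Set.Icc (0 : ℝ) (dist x y),
      dist (f s) (f t) = |s - t|) ∧
    γ = f '' Set.Icc (0 : ℝ) (dist x y)

/-- `Y` is a geodesic metric space. -/
def GeodesicSpace (Y : Type*) [MetricSpace Y] : Prop :=
  ∀ x y : Y, ∃ γ : Set Y, IsGeodesicIn Y γ x y

/-- the shortest projection of the point `y` to the subset `X`. -/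
def projSet {Y : Type*} [MetricSpace Y] (X : Set Y) (y : Y) : Set Y :=
  {x ∈ X | dist y x = Metric.infDist y X}

/-- the shortest projection of the subset `A` to the subset `X`. -/
def projSetOf {Y : Type*} [MetricSpace Y] (X A : Set Y) : Set Y :=
  ⋃ a ∈ A, projSet X a

/-- `d_X(x,y)`, the diameter of `π_X(x) ∪ π_X(y)`. -/
def projDist {Y : Type*} [MetricSpace Y] (X : Set Y) (x y : Y) : ENNReal :=
  EMetric.diam (projSet X x ∪ projSet X y)

/-- `X` is a `C`-contracting subset: any geodesic segment at distance at least `C`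
from `X` has shortest projection to `X` of diameter at most `C`. -/
def IsContractingSet {Y : Type*} [MetricSpace Y] (C : ℝ) (X : Set Y) : Prop :=
  ∀ x y : Y, ∀ γ : Set Y, IsGeodesicIn Y γ x y →
    (∀ p ∈ γ, C ≤ Metric.infDist p X) →
    EMetric.diam (projSetOf X γ) ≤ ENNReal.ofReal C

/-- the Busemann function based at `o` associated to `y`, `b_y(x) = d(x,y) - d(o,y)`. -/
def busemannCM {Y : Type*} [MetricSpace Y] (o y : Y) : C(Y, ℝ) :=
  ⟨fun x => dist x y - dist o y,
    (continuous_id.dist continuous_const).sub continuous_const⟩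

/-- the horofunction compactification of `Y`: the closure of `{b_y : y ∈ Y}` in
`C(Y,ℝ)` with the compact-open topology. -/
def horoCpt (Y : Type*) [MetricSpace Y] (o : Y) : Set C(Y, ℝ) :=
  closure (Set.range (busemannCM o))

/-- `ξ` is a point of the horofunction boundary `∂_h Y`. -/
def IsHoroPoint {Y : Type*} [MetricSpace Y] (o : Y) (ξ : C(Y, ℝ)) : Prop :=
  ξ ∈ horoCpt Y o ∧ ∀ y : Y, ξ ≠ busemannCM o y

/-- a sequence of points of `Y` converges to `ξ` in the horofunction compactification. -/
def HoroConv {Y : Type*} [MetricSpace Y] (o : Y) (u : ℕ → Y) (ξ : C(Y, ℝ)) : Prop :=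
  Filter.Tendsto (fun n => busemannCM o (u n)) atTop (nhds ξ)

/-- two horofunctions have (K-)finite difference for some K. -/
def FinDiff {Y : Type*} [MetricSpace Y] (ξ η : C(Y, ℝ)) : Prop :=
  ∃ K : ℝ, ∀ z : Y, |ξ z - η z| ≤ K

/-- the locus of a subset of the horofunction boundary. -/
def locus {Y : Type*} [MetricSpace Y] (o : Y) (Λ : Set C(Y, ℝ)) : Set C(Y, ℝ) :=
  {η | IsHoroPoint o η ∧ ∃ ξ ∈ Λ, FinDiff ξ η}

/-- the finite-difference relation as a setoid on `C(Y,ℝ)`. -/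
def finDiffSetoid (Y : Type*) [MetricSpace Y] : Setoid C(Y, ℝ) where
  r := FinDiff
  iseqv := ⟨fun ξ => ⟨0, fun z => by simp⟩,
    fun h => h.imp (fun K hK z => by rw [abs_sub_comm]; exact hK z),
    fun h₁ h₂ => by
      obtain ⟨K₁, hK₁⟩ := h₁
      obtain ⟨K₂, hK₂⟩ := h₂
      exact ⟨K₁ + K₂, fun z => (abs_sub_le _ _ _).trans (add_le_add (hK₁ z) (hK₂ z))⟩⟩

/-- the limit set of a subset `X ⊆ Y` in the horofunction boundary. -/
def limitSetOf {Y : Type*} [MetricSpace Y] (o : Y) (X : Set Y) : Set C(Y, ℝ) :=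
  {ξ | IsHoroPoint o ξ ∧ ∃ u : ℕ → Y, (∀ n, u n ∈ X) ∧ HoroConv o u ξ}

/-- accumulation points of a sequence of points of `Y` in the horofunction boundary. -/
def accPoints {Y : Type*} [MetricSpace Y] (o : Y) (u : ℕ → Y) : Set C(Y, ℝ) :=
  {ξ | IsHoroPoint o ξ ∧ ∃ φ : ℕ → ℕ, StrictMono φ ∧ HoroConv o (u ∘ φ) ξ}

/-- `X` is a quasi-geodesic: the image of a quasi-isometric embedding of a real interval. -/
def IsQuasiGeodesicSet {Y : Type*} [MetricSpace Y] (X : Set Y) : Prop :=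
  ∃ (c : ℝ) (I : Set ℝ) (φ : ℝ → Y), 1 ≤ c ∧ I.OrdConnected ∧ X = φ '' I ∧
    ∀ s ∈ I, ∀ t ∈ I,
      (1 / c) * |s - t| - c ≤ dist (φ s) (φ t) ∧ dist (φ s) (φ t) ≤ c * |s - t| + c

section GroupAction

variable {Y : Type*} [MetricSpace Y] {G : Type*} [Group G] [MulAction G Y]

/-- `G` acts by isometries on `Y`. -/
def IsometricAction (G Y : Type*) [Group G] [MulAction G Y] [MetricSpace Y] : Prop :=
  ∀ g : G, Isometry (fun y : Y => g • y)

/-- the action of `G` on `Y` is (metrically) proper. -/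
def ProperAction (G Y : Type*) [Group G] [MulAction G Y] [MetricSpace Y] : Prop :=
  ∀ B : Set Y, Bornology.IsBounded B → Set.Finite {g : G | (g • B) ∩ B ≠ ∅}

/-- `G` is non-elementary: no finite-index subgroup is trivial or infinite cyclic. -/
def NonElementary (G : Type*) [Group G] : Prop :=
  ∀ H : Subgroup G, H.index ≠ 0 → ∀ g : G, H ≠ Subgroup.zpowers g

/-- the orbit of `o` under the cyclic group generated by `f`. -/
def cyclicOrbit (o : Y) (f : G) : Set Y :=
  {y : Y | ∃ n : ℤ, y = f ^ n • o}

/-- `f` is a contracting element with `C`-contracting orbit: it has infinite order,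
`n ↦ fⁿ • o` is a quasi-isometric embedding of `ℤ`, and `⟨f⟩ • o` is `C`-contracting. -/
def IsContractingElt (o : Y) (C : ℝ) (f : G) : Prop :=
  (∀ n : ℤ, n ≠ 0 → f ^ n ≠ 1) ∧
  (∃ c : ℝ, 1 ≤ c ∧ ∀ m n : ℤ,
      (1 / c) * |(m : ℝ) - (n : ℝ)| - c ≤ dist (f ^ m • o) (f ^ n • o) ∧
      dist (f ^ m • o) (f ^ n • o) ≤ c * |(m : ℝ) - (n : ℝ)| + c) ∧
  IsContractingSet C (cyclicOrbit o f)

/-- `f` is a contracting element. -/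
def IsContractingEltAny (o : Y) (f : G) : Prop :=
  ∃ C : ℝ, 1 ≤ C ∧ IsContractingElt o C f

/-- the elementary group `E(f)`: elements moving `⟨f⟩ • o` a finite Hausdorff distance. -/
def EGroup (o : Y) (f : G) : Set G :=
  {g : G | EMetric.hausdorffEdist (g • cyclicOrbit o f) (cyclicOrbit o f) ≠ ⊤}

/-- the axis `Ax(f) = E(f) • o`. -/
def axisOf (o : Y) (f : G) : Set Y :=
  (fun g : G => g • o) '' EGroup o f

/-- the family of all `G`-translated axes of `h` and `k`. -/
def axesPairFam (o : Y) (h k : G) : Set (Set Y) :=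
  {S | ∃ g : G, S = g • axisOf o h ∨ S = g • axisOf o k}

/-- `h` and `k` are independent contracting elements: the family of their translated
axes has bounded projection. -/
def IndepElts (o : Y) (h k : G) : Prop :=
  ∃ B : ℝ, 0 < B ∧ ∀ U ∈ axesPairFam o h k, ∀ V ∈ axesPairFam o h k,
    U ≠ V → EMetric.diam (projSetOf U V) ≤ ENNReal.ofReal B

/-- the family of all `G`-translated axes of the triple `f₁, f₂, f₃`. -/
def axesTripleFam (o : Y) (f₁ f₂ f₃ : G) : Set (Set Y) :=
  {S | ∃ g : G, S = g • axisOf o f₁ ∨ S = g • axisOf o f₂ ∨ S = g • axisOf o f₃}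

/-- `F = {f₁,f₂,f₃}` is an admissible triple with constants `C`, `B₀`: three pairwise
independent contracting elements whose translated axes are `C`-contracting with
`B₀`-bounded projection. -/
def IsAdmissibleTriple (o : Y) (C B₀ : ℝ) (f₁ f₂ f₃ : G) : Prop :=
  f₁ ≠ f₂ ∧ f₁ ≠ f₃ ∧ f₂ ≠ f₃ ∧
  IsContractingEltAny o f₁ ∧ IsContractingEltAny o f₂ ∧ IsContractingEltAny o f₃ ∧
  IndepElts o f₁ f₂ ∧ IndepElts o f₁ f₃ ∧ IndepElts o f₂ f₃ ∧
  (∀ S ∈ axesTripleFam o f₁ f₂ f₃, IsContractingSet C S) ∧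
  (∀ U ∈ axesTripleFam o f₁ f₂ f₃, ∀ V ∈ axesTripleFam o f₁ f₂ f₃,
    U ≠ V → EMetric.diam (projSetOf U V) ≤ ENNReal.ofReal B₀)

/-- the geodesic `γ` contains an `(r,f)`-barrier at `g • o`. -/
def HasBarrier (o : Y) (r : ℝ) (f g : G) (γ : Set Y) : Prop :=
  Metric.infDist (g • o) γ ≤ r ∧ Metric.infDist ((g * f) • o) γ ≤ r

/-- the partial cone `Ω_x^F(g • o, r)`. -/
def partialCone (o x : Y) (f₁ f₂ f₃ : G) (g : G) (r : ℝ) : Set Y :=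
  {z | ∃ γ : Set Y, IsGeodesicIn Y γ x z ∧
      (HasBarrier o r f₁ g γ ∨ HasBarrier o r f₂ g γ ∨ HasBarrier o r f₃ g γ)}

/-- the partial shadow `Π_x^F(g • o, r)`: accumulation points of the partial cone in
the horofunction boundary. -/
def partialShadow (o x : Y) (f₁ f₂ f₃ : G) (g : G) (r : ℝ) : Set C(Y, ℝ) :=
  {ξ | IsHoroPoint o ξ ∧ ∃ u : ℕ → Y, (∀ n, u n ∈ partialCone o x f₁ f₂ f₃ g r) ∧
      HoroConv o u ξ}

/-- `ξ` is an `(r,F)`-conical point. -/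
def IsConicalPt (o : Y) (f₁ f₂ f₃ : G) (r : ℝ) (ξ : C(Y, ℝ)) : Prop :=
  ∃ g₀ : G, Set.Infinite {g : G | ξ ∈ partialShadow o (g₀ • o) f₁ f₂ f₃ g r}

/-- the usual cone `Ω_x(y,r)`. -/
def usualCone (x y : Y) (r : ℝ) : Set Y :=
  {z | ∃ γ : Set Y, IsGeodesicIn Y γ x z ∧ ∃ p ∈ γ, dist p y ≤ r}

/-- the usual shadow `Π_x(y,r)`. -/
def usualShadow (o x y : Y) (r : ℝ) : Set C(Y, ℝ) :=
  {ξ | IsHoroPoint o ξ ∧ ∃ u : ℕ → Y, (∀ n, u n ∈ usualCone x y r) ∧ HoroConv o u ξ}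

/-- the set `Λ_c(G)` of conical points of the action. -/
def conicalSet (G : Type*) {Y : Type*} [Group G] [MulAction G Y] [MetricSpace Y]
    (o : Y) : Set C(Y, ℝ) :=
  {ξ | ∃ r : ℝ, 0 < r ∧ ∃ g₀ : G, ∃ u : ℕ → G,
      Filter.Tendsto (fun n => dist o (u n • o)) atTop atTop ∧
      ∀ n, ξ ∈ usualShadow o (g₀ • o) (u n • o) r}

/-- the attracting fixed-point set `[h⁺]`: the locus of the accumulation points of
`{hⁿ o : n > 0}` in the horofunction boundary. -/
def attrFix (o : Y) (h : G) : Set C(Y, ℝ) :=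
  locus o (accPoints o (fun n : ℕ => h ^ (n + 1) • o))

/-- the repelling fixed-point set `[h⁻]`. -/
def repFix (o : Y) (h : G) : Set C(Y, ℝ) :=
  locus o (accPoints o (fun n : ℕ => h ^ (-(n + 1) : ℤ) • o))

/-- the limit set `Λ G y` of the orbit `G • y` in the horofunction boundary. -/
def orbitLimitSet (G : Type*) {Y : Type*} [Group G] [MulAction G Y] [MetricSpace Y]
    (o y : Y) : Set C(Y, ℝ) :=
  {ξ | IsHoroPoint o ξ ∧ ∃ u : ℕ → G,
      Filter.Tendsto (fun n => busemannCM o (u n • y)) atTop (nhds ξ)}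

/-- the action of an isometry `g` on horofunctions. -/
def horoAct [ContinuousConstSMul G Y] (o : Y) (g : G) (ξ : C(Y, ℝ)) : C(Y, ℝ) :=
  ⟨fun y => ξ (g⁻¹ • y) - ξ (g⁻¹ • o),
    (ξ.continuous.comp (continuous_const_smul g⁻¹)).sub continuous_const⟩

/-- the number of orbit points of `Γ ⊆ G` in the closed ball of radius `R` around `o`. -/
def orbitCount (G : Type*) {Y : Type*} [Group G] [MulAction G Y] [MetricSpace Y]
    (o : Y) (Γ : Set G) (R : ℝ) : ℕ :=
  Nat.card {g : G // g ∈ Γ ∧ dist o (g • o) ≤ R}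

/-- the critical exponent `ω_Γ` of a subset `Γ ⊆ G`. -/
def critExp (G : Type*) {Y : Type*} [Group G] [MulAction G Y] [MetricSpace Y]
    (o : Y) (Γ : Set G) : ℝ :=
  Filter.limsup (fun R : ℝ => Real.log (orbitCount G o Γ R) / R) atTop

/-- an `ω`-dimensional `G`-equivariant conformal density on the horofunction boundary:
a family of finite measures supported on `∂_h Y`, normalized at `o`, `G`-equivariant,
with conformal derivative `dμ_x/dμ_y(ξ) = e^{-ω·B_ξ(x,y)}`. -/
def IsConformalDensity (G : Type*) {Y : Type*} [Group G] [MulAction G Y] [MetricSpace Y]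
    [ContinuousConstSMul G Y] [MeasurableSpace C(Y, ℝ)]
    (o : Y) (ω : ℝ) (μ : Y → MeasureTheory.Measure C(Y, ℝ)) : Prop :=
  (∀ x : Y, MeasureTheory.IsFiniteMeasure (μ x)) ∧
  (∀ x : Y, μ x {ξ : C(Y, ℝ) | ¬ IsHoroPoint o ξ} = 0) ∧
  μ o Set.univ = 1 ∧
  (∀ g : G, ∀ x : Y, MeasureTheory.Measure.map (horoAct o g) (μ x) = μ (g • x)) ∧
  (∀ x y : Y, μ x = (μ y).withDensity
      (fun ξ : C(Y, ℝ) => ENNReal.ofReal (Real.exp (-ω * (ξ x - ξ y)))))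

end GroupAction

/-!
The Busemann sums `b_{x n} + b_{y n}` tend to `ξ + η`, which is unbounded below because `ξ` is
and `η - ξ` is bounded. On a geodesic `[x n, y n]` the sum `b_{x n} + b_{y n}` attains its
minimum, and it is `2`-Lipschitz, so a point of the geodesic at distance `r` from `z` forces
`(b_{x n} + b_{y n}) z - (b_{x n} + b_{y n}) w ≤ 2 r` for every `w`. Choosing `w` with
`(ξ + η) w` far below `(ξ + η) z` pushes the geodesics away from `z`.
-/

section Geodesic

variable {Y : Type*} [MetricSpace Y] {γ : Set Y} {a b : Y}

lemma IsGeodesicIn.dist_add_dist (h : IsGeodesicIn Y γ a b) {p : Y} (hp : p ∈ γ) :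
    dist a p + dist p b = dist a b := by
  obtain ⟨f, hf0, hfb, hiso, rfl⟩ := h
  obtain ⟨s, hs, rfl⟩ := hp
  have h0 : (0 : ℝ) ∈ Icc 0 (dist a b) := ⟨le_rfl, dist_nonneg⟩
  have hb : dist a b ∈ Icc 0 (dist a b) := ⟨dist_nonneg, le_rfl⟩
  have has := hiso 0 h0 s hs
  have hsb := hiso s hs _ hb
  rw [hf0] at has
  rw [hfb] at hsb
  rw [has, hsb, abs_of_nonpos (by linarith [hs.1]), abs_of_nonpos (by linarith [hs.2])]
  ring

lemma IsGeodesicIn.exists_dist_eq (h : IsGeodesicIn Y γ a b) {t : ℝ}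
    (ht : t ∈ Icc 0 (dist a b)) : ∃ p ∈ γ, dist a p = t := by
  obtain ⟨f, hf0, -, hiso, rfl⟩ := h
  refine ⟨f t, mem_image_of_mem f ht, ?_⟩
  rw [← hf0, hiso 0 ⟨le_rfl, dist_nonneg⟩ t ht, zero_sub, abs_neg, abs_of_nonneg ht.1]

lemma IsGeodesicIn.nonempty (h : IsGeodesicIn Y γ a b) : γ.Nonempty :=
  let ⟨p, hp, _⟩ := h.exists_dist_eq ⟨le_rfl, dist_nonneg⟩
  ⟨p, hp⟩

lemma IsGeodesicIn.dist_add_dist_sub_le_two_mul_infDist (h : IsGeodesicIn Y γ a b) (z : Y) :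
    dist z a + dist z b - dist a b ≤ 2 * infDist z γ := by
  rw [← div_le_iff₀' two_pos, le_infDist h.nonempty]
  intro p hp
  rw [div_le_iff₀' two_pos]
  linarith [h.dist_add_dist hp, dist_triangle z p a, dist_triangle z p b, dist_comm a p]

end Geodesic

section Horofunction

variable {Y : Type*} [MetricSpace Y] {o : Y} {ξ : C(Y, ℝ)} {x : ℕ → Y}

@[simp]
lemma busemannCM_apply (o y w : Y) : busemannCM o y w = dist w y - dist o y := rfl

lemma continuous_busemannCM (o : Y) : Continuous (busemannCM o) := by
  have : busemannCM o =
      ContinuousMap.curry ⟨fun p : Y × Y => dist p.2 p.1 - dist o p.1, by fun_prop⟩ := by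
    ext; rfl
  exact this ▸ ContinuousMap.continuous _

lemma HoroConv.tendsto_apply (hx : HoroConv o x ξ) (z : Y) :
    Tendsto (fun n => busemannCM o (x n) z) atTop (𝓝 (ξ z)) :=
  ((continuous_eval_const z).tendsto ξ).comp hx

lemma HoroConv.tendsto_dist_atTop [ProperSpace Y] (hξ : ∀ y, ξ ≠ busemannCM o y)
    (hx : HoroConv o x ξ) : Tendsto (fun n => dist o (x n)) atTop atTop := by
  refine tendsto_atTop.2 fun T => ?_
  by_contra hT
  obtain ⟨a, -, ha⟩ := (isCompact_closedBall o T).exists_mapClusterPt_of_frequently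
    ((not_eventually.1 hT).mono fun n hn => mem_closedBall'.2 (not_le.1 hn).le)
  have hb : MapClusterPt (busemannCM o a) atTop (busemannCM o ∘ x) :=
    ha.continuousAt_comp (continuous_busemannCM o).continuousAt
  exact hξ a (eq_of_nhds_neBot (hb.neBot.mono (inf_le_inf_left _ hx))).symm

/-- Along a geodesic from `o` to a far away `x n`, `busemannCM o (x n)` decreases with slope `1`,
and these values pass to `ξ` uniformly on a ball around `o`. -/
lemma HoroConv.exists_apply_le [ProperSpace Y] (hY : GeodesicSpace Y)
    (hξ : ∀ y, ξ ≠ busemannCM o y) (hx : HoroConv o x ξ) (c : ℝ) : ∃ p, ξ p ≤ c := by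
  set t := max 0 (1 - c)
  have hfar : ∀ᶠ n in atTop, t ≤ dist o (x n) :=
    (hx.tendsto_dist_atTop hξ).eventually_ge_atTop t
  have hunif : ∀ᶠ n in atTop, ∀ w ∈ closedBall o t, dist (ξ w) (busemannCM o (x n) w) < 1 :=
    Metric.tendstoUniformlyOn_iff.1
      (ContinuousMap.tendsto_iff_forall_isCompact_tendstoUniformlyOn.1 hx _
        (isCompact_closedBall o t)) 1 one_pos
  obtain ⟨n, hn, hξn⟩ := (hfar.and hunif).exists
  obtain ⟨γ, hγ⟩ := hY o (x n)
  obtain ⟨p, hpγ, hp⟩ := hγ.exists_dist_eq ⟨le_max_left _ _, hn⟩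
  have hclose := hξn p (mem_closedBall'.2 hp.le)
  rw [Real.dist_eq, busemannCM_apply] at hclose
  refine ⟨p, ?_⟩
  linarith [(abs_lt.1 hclose).2, hγ.dist_add_dist hpγ, le_max_right 0 (1 - c)]

lemma busemannCM_add_sub_le_two_mul_infDist {γ : Set Y} {a b : Y}
    (h : IsGeodesicIn Y γ a b) (o z w : Y) :
    busemannCM o a z + busemannCM o b z - (busemannCM o a w + busemannCM o b w) ≤
      2 * infDist z γ := by
  simp only [busemannCM_apply]
  linarith [h.dist_add_dist_sub_le_two_mul_infDist z, dist_triangle_left a b w]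

end Horofunction

theorem statement3_general {Y : Type*} [MetricSpace Y] [ProperSpace Y]
    (hY : GeodesicSpace Y) (o : Y)
    (ξ η : C(Y, ℝ)) (hξ : IsHoroPoint o ξ) (hfd : FinDiff ξ η)
    (x y : ℕ → Y) (hx : HoroConv o x ξ) (hy : HoroConv o y η)
    (γ : ℕ → Set Y) (hγ : ∀ n, IsGeodesicIn Y (γ n) (x n) (y n)) :
    ∀ z : Y, Filter.Tendsto (fun n => Metric.infDist z (γ n)) atTop atTop := by
  intro z
  obtain ⟨K, hK⟩ := hfd
  refine tendsto_atTop.2 fun M => ?_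
  obtain ⟨w, hw⟩ := hx.exists_apply_le hY hξ.2 ((ξ z + η z - K) / 2 - M - 1)
  have hηw : η w ≤ ξ w + K := by linarith [(abs_le.1 (hK w)).1]
  have hlim := ((hx.tendsto_apply z).add (hy.tendsto_apply z)).sub
    ((hx.tendsto_apply w).add (hy.tendsto_apply w))
  filter_upwards [hlim.eventually (eventually_gt_nhds (by linarith : 2 * M < _))] with n hn
  linarith [busemannCM_add_sub_le_two_mul_infDist (hγ n) o z w]

/-- every point of the horofunction boundary of a proper geodesic space
is non-pinched: if `ξ, η ∈ ∂_h Y` have finite difference, `x n → ξ` and `y n → η`,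
then any choice of geodesics from `x n` to `y n` exits every bounded set. -/
theorem statement3 {Y : Type*} [MetricSpace Y] [ProperSpace Y]
    (hY : GeodesicSpace Y) (o : Y)
    (ξ η : C(Y, ℝ)) (hξ : IsHoroPoint o ξ) (hη : IsHoroPoint o η) (hfd : FinDiff ξ η)
    (x y : ℕ → Y) (hx : HoroConv o x ξ) (hy : HoroConv o y η)
    (γ : ℕ → Set Y) (hγ : ∀ n, IsGeodesicIn Y (γ n) (x n) (y n)) :
    ∀ z : Y, Filter.Tendsto (fun n => Metric.infDist z (γ n)) atTop atTop :=
  statement3_general hY o ξ η hξ hfd x y hx hy γ hγ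

end ConfDyn
end
end

section
/- Let Λ ⊆ ∂_hY be saturated ([Λ] = Λ) and suppose the finite-difference relation restricted to Λ is K-finite for some K ≥ 0, i.e. any two points of Λ lying in the same finite-difference class have K-finite difference. Then the quotient map ξ ↦ [ξ] from Λ onto the set [Λ] of classes, endowed with the quotient topology, is a closed map with compact fibers; moreover the quotient space [Λ] is Hausdorff and second countable. -/
open Metric Filter Topology Set MeasureTheory Pointwise

noncomputable section

namespace ConfDyn

section Aux

variable {Y : Type*} [MetricSpace Y]

lemma busemann_apply (o y x : Y) : busemannCM o y x = dist x y - dist o y := rfl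

lemma busemann_lipschitzWith (o y : Y) : LipschitzWith 1 (busemannCM o y) := by
  rw [lipschitzWith_iff_dist_le_mul]
  intro x z
  simp only [busemann_apply, Real.dist_eq, NNReal.coe_one, one_mul, sub_sub_sub_cancel_right]
  exact abs_dist_sub_le x z y

/-- the set of 1-Lipschitz functions vanishing at `o`. -/
def lipPt (o : Y) : Set C(Y, ℝ) := {f | LipschitzWith 1 f ∧ f o = 0}

lemma horoCpt_subset_lipPt (o : Y) : horoCpt Y o ⊆ lipPt o := by
  have hcl : IsClosed (lipPt o) := by
    have : lipPt o = (⋂ x : Y, ⋂ z : Y, {f : C(Y, ℝ) | dist (f x) (f z) ≤ dist x z}) ∩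
        {f : C(Y, ℝ) | f o = 0} := by
      ext f
      simp only [lipPt, Set.mem_inter_iff, Set.mem_iInter, Set.mem_setOf_eq,
        lipschitzWith_iff_dist_le_mul, NNReal.coe_one, one_mul]
    rw [this]
    refine IsClosed.inter (isClosed_iInter fun x => isClosed_iInter fun z => ?_) ?_
    · exact isClosed_le ((continuous_eval_const x).dist
        (continuous_eval_const z)) continuous_const
    · exact isClosed_eq (continuous_eval_const o) continuous_const
  refine closure_minimal ?_ hcl
  rintro f ⟨y, rfl⟩
  exact ⟨busemann_lipschitzWith o y, by simp [busemann_apply]⟩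

lemma isCompact_lipPt [ProperSpace Y] (o : Y) : IsCompact (lipPt o) := by
  apply ArzelaAscoli.isCompact_of_equicontinuous
  · -- compactness of the image in the product topology
    have himg : (ContinuousMap.toFun '' lipPt o) =
        {g : Y → ℝ | (∀ x z : Y, dist (g x) (g z) ≤ dist x z) ∧ g o = 0} := by
      ext g
      constructor
      · rintro ⟨f, ⟨hf1, hf2⟩, rfl⟩
        refine ⟨fun x z => ?_, hf2⟩
        simpa using hf1.dist_le_mul x z
      · rintro ⟨h1, h2⟩
        have hlip : LipschitzWith 1 g := by
          rw [lipschitzWith_iff_dist_le_mul]; simpa using h1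
        exact ⟨⟨g, hlip.continuous⟩, ⟨hlip, h2⟩, rfl⟩
    rw [himg]
    have hclosed : IsClosed {g : Y → ℝ | (∀ x z : Y, dist (g x) (g z) ≤ dist x z) ∧ g o = 0} := by
      have : {g : Y → ℝ | (∀ x z : Y, dist (g x) (g z) ≤ dist x z) ∧ g o = 0} =
          (⋂ x : Y, ⋂ z : Y, {g : Y → ℝ | dist (g x) (g z) ≤ dist x z}) ∩
          {g : Y → ℝ | g o = 0} := by
        ext g; simp [Set.mem_iInter]
      rw [this]
      refine IsClosed.inter (isClosed_iInter fun x => isClosed_iInter fun z => ?_) ?_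
      · exact isClosed_le ((continuous_apply x).dist (continuous_apply z)) continuous_const
      · exact isClosed_eq (continuous_apply o) continuous_const
    refine IsCompact.of_isClosed_subset
      (isCompact_univ_pi fun x => isCompact_closedBall (0 : ℝ) (dist o x)) hclosed ?_
    rintro g ⟨h1, h2⟩
    intro x _
    have := h1 x o
    rw [h2] at this
    simpa [Real.dist_eq, dist_comm x o] using this
  · -- equicontinuity
    intro x
    rw [Metric.equicontinuousAt_iff]
    intro ε hε
    refine ⟨ε, hε, fun z hz i => ?_⟩
    have h := i.2.1.dist_le_mul x z
    rw [NNReal.coe_one, one_mul] at h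
    exact lt_of_le_of_lt h (by rwa [dist_comm])

lemma continuous_busemann (o : Y) : Continuous (busemannCM o : Y → C(Y, ℝ)) := by
  have : (busemannCM o : Y → C(Y, ℝ)) =
      ⇑(ContinuousMap.curry ⟨fun p : Y × Y => dist p.2 p.1 - dist o p.1,
        (continuous_snd.dist continuous_fst).sub (continuous_const.dist continuous_fst)⟩) := by
    ext y x; rfl
  rw [this]
  exact (ContinuousMap.curry _).continuous

/-- A horofunction cannot be within bounded distance of an internal Busemann function. -/
lemma horo_not_near_busemann [ProperSpace Y] (hY : GeodesicSpace Y) (o : Y)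
    {η : C(Y, ℝ)} (hη : IsHoroPoint o η) (y : Y) (K' : ℝ)
    (hb : ∀ z : Y, |busemannCM o y z - η z| ≤ K') : False := by
  haveI : Nonempty Y := ⟨o⟩
  set M : ℝ := dist o y + K' with hMdef
  have hK' : 0 ≤ K' := le_trans (abs_nonneg _) (hb o)
  have hM : 0 ≤ M := add_nonneg dist_nonneg hK'
  have hlow : ∀ z : Y, -M ≤ η z := by
    intro z
    have h1 := (abs_le.1 (hb z)).2
    have h2 : -(dist o y) ≤ busemannCM o y z := by
      have := dist_nonneg (x := z) (y := y)
      simp only [busemann_apply]; linarith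
    linarith
  obtain ⟨u, hu, hconv⟩ := mem_closure_iff_seq_limit.1 hη.1
  choose v hv using hu
  have htu : TendstoUniformlyOn (fun n => ⇑(u n)) (⇑η) atTop (closedBall o (M + 2)) :=
    ContinuousMap.tendsto_iff_forall_isCompact_tendstoUniformlyOn.1 hconv
      (closedBall o (M + 2)) (isCompact_closedBall o (M + 2))
  have hev : ∀ᶠ n in atTop, ∀ x ∈ closedBall o (M + 2), dist (η x) (u n x) < 1 :=
    (Metric.tendstoUniformlyOn_iff.1 htu) 1 one_pos
  have key : ∀ᶠ n in atTop, u n ∈ busemannCM o '' closedBall o (M + 1) := by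
    filter_upwards [hev] with n hn
    set d : ℝ := dist o (v n) with hd
    have hdle : d ≤ M + 2 := by
      by_contra hgt
      push_neg at hgt
      obtain ⟨γ, f, hf0, hfd, hiso, -⟩ := hY o (v n)
      set R : ℝ := M + 2 with hR
      have hR0 : 0 ≤ R := by linarith
      have hRd : R ≤ d := le_of_lt hgt
      have hRmem : R ∈ Set.Icc (0 : ℝ) (dist o (v n)) := ⟨hR0, hRd⟩
      have h0mem : (0 : ℝ) ∈ Set.Icc (0 : ℝ) (dist o (v n)) := ⟨le_refl _, dist_nonneg⟩
      have hdmem : d ∈ Set.Icc (0 : ℝ) (dist o (v n)) := ⟨dist_nonneg, le_refl _⟩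
      set p : Y := f R with hp
      have hop : dist o p = R := by
        have := hiso 0 h0mem R hRmem
        rw [hf0] at this
        rw [this]
        rw [abs_of_nonpos (by linarith)]
        ring
      have hpv : dist p (v n) = d - R := by
        have := hiso R hRmem d hdmem
        rw [hfd] at this
        rw [this, abs_of_nonpos (by linarith)]
        ring
      have hup : u n p = -R := by
        rw [← hv n, busemann_apply, hpv, ← hd]; ring
      have hpball : p ∈ closedBall o (M + 2) := by
        rw [Metric.mem_closedBall, dist_comm, hop]
      have := hn p hpball
      rw [hup, Real.dist_eq] at this
      have hηp := hlow p
      rw [abs_lt] at this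
      linarith
    -- now `v n` is in the ball of radius `M+2`
    have hvball : v n ∈ closedBall o (M + 2) := by rwa [Metric.mem_closedBall, dist_comm]
    have huv : u n (v n) = -d := by
      rw [← hv n, busemann_apply, dist_self, ← hd]; ring
    have := hn (v n) hvball
    rw [huv, Real.dist_eq, abs_lt] at this
    have hηv := hlow (v n)
    refine ⟨v n, ?_, hv n⟩
    rw [Metric.mem_closedBall, dist_comm]
    show d ≤ M + 1
    linarith
  have hmem : η ∈ busemannCM o '' closedBall o (M + 1) := by
    have hcpt : IsCompact (busemannCM o '' closedBall o (M + 1)) :=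
      (isCompact_closedBall o (M + 1)).image (continuous_busemann o)
    exact hcpt.isClosed.mem_of_tendsto hconv key
  obtain ⟨y', -, hy'⟩ := hmem
  exact hη.2 y' hy'.symm

end Aux

/-- if `Λ ⊆ ∂_h Y` is saturated and the finite-difference relation on `Λ`
is `K`-finite, then the quotient map onto the set of classes is a closed map with
compact fibers, and the quotient space is Hausdorff and second countable. -/
theorem statement4 {Y : Type*} [MetricSpace Y] [ProperSpace Y]
    (hY : GeodesicSpace Y) (o : Y)
    (Λ : Set C(Y, ℝ)) (hΛ : ∀ ξ ∈ Λ, IsHoroPoint o ξ)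
    (hsat : ∀ ξ ∈ Λ, ∀ η : C(Y, ℝ), IsHoroPoint o η → FinDiff ξ η → η ∈ Λ)
    (K : ℝ) (hK : 0 ≤ K)
    (hfin : ∀ ξ ∈ Λ, ∀ η ∈ Λ, FinDiff ξ η → ∀ z : Y, |ξ z - η z| ≤ K) :
    IsClosedMap
      (Quotient.mk (Setoid.comap (Subtype.val : Λ → C(Y, ℝ)) (finDiffSetoid Y))) ∧
    (∀ q : Quotient (Setoid.comap (Subtype.val : Λ → C(Y, ℝ)) (finDiffSetoid Y)),
      IsCompact
        (Quotient.mk (Setoid.comap (Subtype.val : Λ → C(Y, ℝ)) (finDiffSetoid Y)) ⁻¹'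
          {q})) ∧
    T2Space (Quotient (Setoid.comap (Subtype.val : Λ → C(Y, ℝ)) (finDiffSetoid Y))) ∧
    SecondCountableTopology
      (Quotient (Setoid.comap (Subtype.val : Λ → C(Y, ℝ)) (finDiffSetoid Y))) := by
  haveI : Nonempty Y := ⟨o⟩
  set s : Setoid ↥Λ := Setoid.comap (Subtype.val : Λ → C(Y, ℝ)) (finDiffSetoid Y) with hs
  set q : ↥Λ → Quotient s := Quotient.mk s with hqdef
  have hq : IsQuotientMap q := isQuotientMap_quot_mk
  have hrel : ∀ a b : ↥Λ, q a = q b ↔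
      ∀ z : Y, |(a : C(Y, ℝ)) z - (b : C(Y, ℝ)) z| ≤ K := by
    intro a b
    constructor
    · intro h
      have h2 : FinDiff (a : C(Y, ℝ)) (b : C(Y, ℝ)) := Quotient.exact h
      exact hfin _ a.2 _ b.2 h2
    · intro h
      exact Quotient.sound (show FinDiff (a : C(Y, ℝ)) (b : C(Y, ℝ)) from ⟨K, h⟩)
  have hΛsub : (Λ : Set C(Y, ℝ)) ⊆ horoCpt Y o := fun ξ hξ => (hΛ ξ hξ).1
  have hLcpt : IsCompact (lipPt o) := isCompact_lipPt o
  -- the saturation of a closed set is closed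
  have key : ∀ F : Set ↥Λ, IsClosed F →
      IsClosed {b : ↥Λ | ∃ a ∈ F, q a = q b} := by
    intro F hF
    obtain ⟨C, hC, hFC⟩ := isClosed_induced_iff.1 hF
    set F' : Set C(Y, ℝ) := Subtype.val '' F with hF'
    have hF'horo : closure F' ⊆ horoCpt Y o :=
      closure_minimal (fun g hg => hΛsub (by rcases hg with ⟨a, -, rfl⟩; exact a.2))
        isClosed_closure
    have hF'L : IsCompact (closure F') :=
      hLcpt.of_isClosed_subset isClosed_closure (hF'horo.trans (horoCpt_subset_lipPt o))
    haveI : CompactSpace ↥(closure F') := isCompact_iff_compactSpace.1 hF'L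
    set W : Set (↥(closure F') × C(Y, ℝ)) :=
      {p | ∀ z : Y, |(p.1 : C(Y, ℝ)) z - p.2 z| ≤ K} with hW
    have hWclosed : IsClosed W := by
      have hWeq : W = ⋂ z : Y,
          {p : ↥(closure F') × C(Y, ℝ) | |(p.1 : C(Y, ℝ)) z - p.2 z| ≤ K} := by
        ext p; simp [hW, Set.mem_iInter]
      rw [hWeq]
      refine isClosed_iInter fun z => ?_
      have hc1 : Continuous fun p : ↥(closure F') × C(Y, ℝ) => (p.1 : C(Y, ℝ)) z :=
        (continuous_eval_const z).comp (continuous_subtype_val.comp continuous_fst)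
      have hc2 : Continuous fun p : ↥(closure F') × C(Y, ℝ) => p.2 z :=
        (continuous_eval_const z).comp continuous_snd
      exact isClosed_le (hc1.sub hc2).abs continuous_const
    have hS' : IsClosed (Prod.snd '' W) := isClosedMap_snd_of_compactSpace W hWclosed
    have heq : {b : ↥Λ | ∃ a ∈ F, q a = q b} = Subtype.val ⁻¹' (Prod.snd '' W) := by
      ext b
      simp only [Set.mem_setOf_eq, Set.mem_preimage, Set.mem_image]
      constructor
      · rintro ⟨a, haF, hab⟩
        have hbd := (hrel a b).1 hab
        exact ⟨(⟨a.1, subset_closure ⟨a, haF, rfl⟩⟩, (b : C(Y, ℝ))), hbd, rfl⟩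
      · rintro ⟨⟨⟨f, hfcl⟩, g⟩, hbd, hg⟩
        simp only [hW, Set.mem_setOf_eq] at hbd
        simp only at hg
        subst hg
        have hfhoro : IsHoroPoint o f := by
          refine ⟨hF'horo hfcl, fun y hy => ?_⟩
          exact absurd (horo_not_near_busemann hY o (hΛ b.1 b.2) y K
            (fun z => by rw [← hy]; exact hbd z)) not_false
        have hfΛ : f ∈ Λ := hsat b.1 b.2 f hfhoro
          ⟨K, fun z => by rw [abs_sub_comm]; exact hbd z⟩
        have hfF : (⟨f, hfΛ⟩ : ↥Λ) ∈ F := by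
          rw [← hFC]
          exact hC.closure_subset_iff.2
            (by rintro x ⟨a, haF, rfl⟩; rw [← hFC] at haF; exact haF) hfcl
        exact ⟨⟨f, hfΛ⟩, hfF, (hrel ⟨f, hfΛ⟩ b).2 hbd⟩
    rw [heq]
    exact hS'.preimage continuous_subtype_val
  -- closed map
  have hclosedmap : IsClosedMap q := by
    intro F hF
    rw [← hq.isClosed_preimage]
    have hpre : q ⁻¹' (q '' F) = {b : ↥Λ | ∃ a ∈ F, q a = q b} := by
      ext b
      simp only [Set.mem_preimage, Set.mem_image, Set.mem_setOf_eq]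
    rw [hpre]
    exact key F hF
  -- compact fibers
  have hfib : ∀ qq : Quotient s, IsCompact (q ⁻¹' {qq}) := by
    intro qq
    induction qq using Quotient.ind with
    | _ a =>
    have hval : Subtype.val '' (q ⁻¹' {Quotient.mk s a}) =
        horoCpt Y o ∩ {g : C(Y, ℝ) | ∀ z : Y, |(a : C(Y, ℝ)) z - g z| ≤ K} := by
      ext g
      constructor
      · rintro ⟨b, hb, rfl⟩
        have hba : q a = q b := (Set.mem_singleton_iff.1 hb).symm
        exact ⟨(hΛ b.1 b.2).1, (hrel a b).1 hba⟩
      · rintro ⟨hg1, hg2⟩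
        have hghoro : IsHoroPoint o g := by
          refine ⟨hg1, fun y hy => ?_⟩
          exact absurd (horo_not_near_busemann hY o (hΛ a.1 a.2) y K
            (fun z => by rw [← hy, abs_sub_comm]; exact hg2 z)) not_false
        have hgΛ : g ∈ Λ := hsat a.1 a.2 g hghoro ⟨K, hg2⟩
        refine ⟨⟨g, hgΛ⟩, ?_, rfl⟩
        exact Set.mem_singleton_iff.2 ((hrel a ⟨g, hgΛ⟩).2 hg2).symm
    have hTclosed : IsClosed (horoCpt Y o ∩
        {g : C(Y, ℝ) | ∀ z : Y, |(a : C(Y, ℝ)) z - g z| ≤ K}) := by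
      refine IsClosed.inter isClosed_closure ?_
      have : {g : C(Y, ℝ) | ∀ z : Y, |(a : C(Y, ℝ)) z - g z| ≤ K} =
          ⋂ z : Y, {g : C(Y, ℝ) | |(a : C(Y, ℝ)) z - g z| ≤ K} := by
        ext g; simp [Set.mem_iInter]
      rw [this]
      refine isClosed_iInter fun z => ?_
      exact isClosed_le ((continuous_const.sub
        (continuous_eval_const z)).abs) continuous_const
    have hTcpt : IsCompact (horoCpt Y o ∩
        {g : C(Y, ℝ) | ∀ z : Y, |(a : C(Y, ℝ)) z - g z| ≤ K}) :=
      hLcpt.of_isClosed_subset hTclosed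
        ((Set.inter_subset_left).trans (horoCpt_subset_lipPt o))
    rw [IsEmbedding.subtypeVal.isCompact_iff, hval]
    exact hTcpt
  -- Hausdorff
  have hT2 : T2Space (Quotient s) := by
    refine ⟨fun p1 p2 hne => ?_⟩
    have hdisj : Disjoint (q ⁻¹' {p1}) (q ⁻¹' {p2}) := by
      rw [Set.disjoint_left]
      rintro x h1 h2
      exact hne ((Set.mem_singleton_iff.1 h1).symm.trans (Set.mem_singleton_iff.1 h2))
    obtain ⟨U, V, hUo, hVo, hAU, hBV, hUV⟩ :=
      SeparatedNhds.of_isCompact_isCompact (hfib p1) (hfib p2) hdisj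
    refine ⟨(q '' Uᶜ)ᶜ, (q '' Vᶜ)ᶜ,
      (hclosedmap _ hUo.isClosed_compl).isOpen_compl,
      (hclosedmap _ hVo.isClosed_compl).isOpen_compl, ?_, ?_, ?_⟩
    · rintro ⟨c, hcU, hcq⟩
      exact hcU (hAU (Set.mem_singleton_iff.2 hcq))
    · rintro ⟨c, hcV, hcq⟩
      exact hcV (hBV (Set.mem_singleton_iff.2 hcq))
    · rw [Set.disjoint_left]
      rintro p h1 h2
      obtain ⟨b, rfl⟩ := Quot.exists_rep p
      have hbU : b ∈ U := by
        by_contra hbU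
        exact h1 ⟨b, hbU, rfl⟩
      have hbV : b ∈ V := by
        by_contra hbV
        exact h2 ⟨b, hbV, rfl⟩
      exact Set.disjoint_left.1 hUV hbU hbV
  -- second countable
  have hsc : SecondCountableTopology (Quotient s) := by
    obtain ⟨B, hBc, -, hBb⟩ := TopologicalSpace.exists_countable_basis ↥Λ
    refine TopologicalSpace.IsTopologicalBasis.secondCountableTopology
      (b := (fun t : Set (Set ↥Λ) => (q '' (⋃₀ t)ᶜ)ᶜ) ''
        {t : Set (Set ↥Λ) | t.Finite ∧ t ⊆ B}) ?_ ?_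
    · refine TopologicalSpace.isTopologicalBasis_of_isOpen_of_nhds ?_ ?_
      · rintro - ⟨t, ⟨htf, htB⟩, rfl⟩
        exact (hclosedmap _
          (isOpen_sUnion fun u hu => hBb.isOpen (htB hu)).isClosed_compl).isOpen_compl
      · intro p W hpW hWo
        have hsub : q ⁻¹' {p} ⊆ q ⁻¹' W := fun x hx => by
          rw [Set.mem_preimage, Set.mem_singleton_iff.1 hx]
          exact hpW
        have hcover : q ⁻¹' {p} ⊆ ⋃ u ∈ {u : Set ↥Λ | u ∈ B ∧ u ⊆ q ⁻¹' W}, u := by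
          intro x hx
          obtain ⟨u, huB, hxu, huW⟩ := hBb.exists_subset_of_mem_open (hsub hx)
            (hWo.preimage hq.continuous)
          exact Set.mem_biUnion ⟨huB, huW⟩ hxu
        obtain ⟨t, htb, htf, htc⟩ := (hfib p).elim_finite_subcover_image
          (fun u hu => hBb.isOpen hu.1) hcover
        refine ⟨(q '' (⋃₀ t)ᶜ)ᶜ, ⟨t, ⟨htf, fun u hu => (htb hu).1⟩, rfl⟩, ?_, ?_⟩
        · rintro ⟨c, hc, hcq⟩
          refine hc ?_
          rw [Set.sUnion_eq_biUnion]
          exact htc (Set.mem_singleton_iff.2 hcq)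
        · intro p' hp'
          obtain ⟨b, rfl⟩ := Quot.exists_rep p'
          have hbt : b ∈ ⋃₀ t := by
            by_contra hbt
            exact hp' ⟨b, hbt, rfl⟩
          obtain ⟨u, hut, hbu⟩ := hbt
          exact (htb hut).2 hbu
    · exact (Set.countable_setOf_finite_subset hBc).image _
  exact ⟨hclosedmap, hfib, hT2, hsc⟩

end ConfDyn
end
end

section
/- Let U ⊆ Y be a C-contracting closed subset, let r ≥ 100C, and let α be a geodesic with ‖N_r(U) ∩ α‖ > 3r. Let x, y ∈ α ∩ N_r(U) be the entry and exit points of α in N_r(U), i.e. d(x,y) = ‖N_r(U) ∩ α‖ with x preceding y along α. Then α meets N_C(U); the entry and exit points of α in N_C(U) are within distance 3r/2 of x and y respectively; ‖N_C(U) ∩ α‖ ≥ ‖N_r(U) ∩ α‖ − 3r; and d_U(α⁻, α⁺) ≥ ‖N_r(U) ∩ α‖ − 4r, where α⁻, α⁺ denote the endpoints of α. -/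
/-!
A subsegment of `α` whose points all stay at distance `≥ C` from `U` has, by contraction,
shortest projection of diameter `≤ C`, so its length is at most `d(p, U) + C + d(q, U)` for its
endpoints `p`, `q`. Applied to `[s, t]`, whose length exceeds `3r ≥ 2r + C`, this forces `α` into
`N_C(U)`. The parts of `α` before its entry point `u` and after its exit point `v` in `N_C(U)` stay
at distance `≥ C` from `U` up to `u` and `v` themselves (by continuity), so the projections of
`α⁻` and of `s` lie within `2C` of `u`, and those of `α⁺` and `t` within `2C` of `v`. As
`r ≥ 100C`, all error terms are absorbed into `3r/2`, `3r` and `4r`.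
-/

open Metric Filter Topology Set MeasureTheory Pointwise

noncomputable section

namespace ConfDyn

theorem mem_cthickening_iff_infDist_le {Y : Type*} [MetricSpace Y] {δ : ℝ} {U : Set Y}
    (hδ : 0 ≤ δ) (hne : U.Nonempty) {x : Y} :
    x ∈ cthickening δ U ↔ infDist x U ≤ δ := by
  rw [mem_cthickening_iff, infDist, ENNReal.le_ofReal_iff_toReal_le (infEDist_ne_top hne) hδ]

theorem projSet_nonempty {Y : Type*} [MetricSpace Y] [ProperSpace Y] {U : Set Y}
    (hUcl : IsClosed U) (hne : U.Nonempty) (x : Y) : (projSet U x).Nonempty := by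
  obtain ⟨z, hz, hdist⟩ := hUcl.exists_infDist_eq_dist hne x
  exact ⟨z, hz, hdist.symm⟩

theorem dist_le_infDist_add {Y : Type*} [MetricSpace Y] [ProperSpace Y] {U : Set Y}
    (hUcl : IsClosed U) (hne : U.Nonempty) {z y : Y} {K : ℝ}
    (hK : ∀ x ∈ projSet U z, dist x y ≤ K) : dist z y ≤ infDist z U + K := by
  obtain ⟨x, hx⟩ := projSet_nonempty hUcl hne z
  calc dist z y ≤ dist z x + dist x y := dist_triangle _ _ _
    _ ≤ infDist z U + K := by rw [hx.2]; linarith [hK x hx]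

theorem exists_first_last_mem_preimage {Y : Type*} [TopologicalSpace Y] {f : ℝ → Y}
    {a b : ℝ} {K : Set Y} (hf : ContinuousOn f (Icc a b)) (hK : IsClosed K)
    (hmem : ∃ w ∈ Icc a b, f w ∈ K) :
    ∃ u ∈ Icc a b, ∃ v ∈ Icc a b, f u ∈ K ∧ f v ∈ K ∧
      ∀ w ∈ Icc a b, f w ∈ K → u ≤ w ∧ w ≤ v := by
  have hcpt : IsCompact (Icc a b ∩ f ⁻¹' K) :=
    isCompact_Icc.of_isClosed_subset (hf.preimage_isClosed_of_isClosed isClosed_Icc hK)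
      inter_subset_left
  obtain ⟨u, ⟨hu, hfu⟩, hleast⟩ := hcpt.exists_isLeast hmem
  obtain ⟨v, ⟨hv, hfv⟩, hgreatest⟩ := hcpt.exists_isGreatest hmem
  exact ⟨u, hu, v, hv, hfu, hfv, fun w hw hfw => ⟨hleast ⟨hw, hfw⟩, hgreatest ⟨hw, hfw⟩⟩⟩

section GeodesicParametrization

variable {Y : Type*} [MetricSpace Y] {f : ℝ → Y} {L : ℝ}

theorem dist_eq_sub_of_dist_eq_abs
    (hiso : ∀ s ∈ Icc (0 : ℝ) L, ∀ t ∈ Icc (0 : ℝ) L, dist (f s) (f t) = |s - t|)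
    {s t : ℝ} (hs : s ∈ Icc 0 L) (ht : t ∈ Icc 0 L) (hst : s ≤ t) :
    dist (f s) (f t) = t - s := by
  rw [hiso s hs t ht, abs_sub_comm, abs_of_nonneg (sub_nonneg.2 hst)]

theorem continuousOn_of_dist_eq_abs
    (hiso : ∀ s ∈ Icc (0 : ℝ) L, ∀ t ∈ Icc (0 : ℝ) L, dist (f s) (f t) = |s - t|) :
    ContinuousOn f (Icc 0 L) :=
  (LipschitzOnWith.of_dist_le_mul (K := 1) fun s hs t ht => by
    simp [hiso s hs t ht, Real.dist_eq]).continuousOn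

theorem isGeodesicIn_image_Icc
    (hiso : ∀ s ∈ Icc (0 : ℝ) L, ∀ t ∈ Icc (0 : ℝ) L, dist (f s) (f t) = |s - t|)
    {s t : ℝ} (hs : s ∈ Icc 0 L) (ht : t ∈ Icc 0 L) (hst : s ≤ t) :
    IsGeodesicIn Y (f '' Icc s t) (f s) (f t) := by
  have hd := dist_eq_sub_of_dist_eq_abs hiso hs ht hst
  have hsub : Icc s t ⊆ Icc 0 L := Icc_subset_Icc hs.1 ht.2
  have himage : (fun w => s + w) '' Icc 0 (t - s) = Icc s t := by
    rw [image_const_add_Icc, add_zero, add_sub_cancel]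
  refine ⟨fun w => f (s + w), by simp, by simp [hd], ?_, ?_⟩
  · intro w₁ hw₁ w₂ hw₂
    rw [hd] at hw₁ hw₂
    rw [hiso _ (hsub (himage ▸ mem_image_of_mem _ hw₁)) _
      (hsub (himage ▸ mem_image_of_mem _ hw₂)), add_sub_add_left_eq_sub]
  · rw [hd, ← himage, image_image]

theorem mem_Icc_of_ediam_le
    (hiso : ∀ s ∈ Icc (0 : ℝ) L, ∀ t ∈ Icc (0 : ℝ) L, dist (f s) (f t) = |s - t|)
    {s t w : ℝ} (hs : s ∈ Icc 0 L) (ht : t ∈ Icc 0 L) (hw : w ∈ Icc 0 L) (hst : s ≤ t)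
    {A : Set Y} (hsA : f s ∈ A) (htA : f t ∈ A) (hwA : f w ∈ A)
    (hA : ediam A ≤ ENNReal.ofReal (t - s)) : w ∈ Icc s t := by
  have hle : ∀ z ∈ A, dist (f w) z ≤ t - s := fun z hz => by
    rw [← ENNReal.ofReal_le_ofReal_iff (sub_nonneg.2 hst), ← edist_dist]
    exact (edist_le_ediam_of_mem hwA hz).trans hA
  have hws := hle _ hsA
  have hwt := hle _ htA
  rw [hiso w hw s hs, abs_le] at hws
  rw [hiso w hw t ht, abs_le] at hwt
  constructor <;> linarith

end GeodesicParametrization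

theorem ofReal_le_ediam_add {Y : Type*} [MetricSpace Y] {A : Set Y} {x y : Y} {a c : ℝ}
    (hx : x ∈ A) (hy : y ∈ A) (h : a ≤ dist x y + c) :
    ENNReal.ofReal a ≤ ediam A + ENNReal.ofReal c := by
  refine (ENNReal.ofReal_le_ofReal h).trans (ENNReal.ofReal_add_le.trans ?_)
  rw [← edist_dist]
  gcongr
  exact edist_le_ediam_of_mem hx hy

section Contracting

variable {Y : Type*} [MetricSpace Y] {C : ℝ} {U : Set Y} {f : ℝ → Y} {L p q u v : ℝ}

theorem le_infDist_of_forall_ne_notMem_cthickening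
    (hiso : ∀ s ∈ Icc (0 : ℝ) L, ∀ t ∈ Icc (0 : ℝ) L, dist (f s) (f t) = |s - t|)
    (hne : U.Nonempty) (hp : p ∈ Icc 0 L) (hq : q ∈ Icc 0 L) (hpq : p ≠ q)
    (hfar : ∀ w ∈ uIcc p q, w ≠ q → f w ∉ cthickening C U) :
    ∀ w ∈ uIcc p q, C ≤ infDist (f w) U := by
  have hcont : ContinuousOn (fun w => infDist (f w) U) (uIcc p q) :=
    (continuous_infDist_pt U).comp_continuousOn
      ((continuousOn_of_dist_eq_abs hiso).mono (uIcc_subset_Icc hp hq))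
  have hdense : closure (uIcc p q \ {q}) = uIcc p q := by
    rcases hpq.lt_or_gt with h | h
    · rw [uIcc_of_le h.le, Icc_sdiff_right, closure_Ico h.ne]
    · rw [uIcc_of_ge h.le, Icc_sdiff_left, closure_Ioc h.ne]
  have hsub : uIcc p q ⊆ uIcc p q ∩ (fun w => infDist (f w) U) ⁻¹' Ici C :=
    hdense.symm.subset.trans <| closure_minimal
      (fun w hw => ⟨hw.1, le_of_not_ge fun h => hfar w hw.1 hw.2
        ((mem_cthickening_iff_infDist_le (infDist_nonneg.trans h) hne).2 h)⟩)
      (hcont.preimage_isClosed_of_isClosed isClosed_Icc isClosed_Ici)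
  exact fun w hw => (hsub hw).2

namespace IsContractingSet

theorem dist_le_of_forall_le_infDist (hU : IsContractingSet C U) (hC : 0 ≤ C)
    (hiso : ∀ s ∈ Icc (0 : ℝ) L, ∀ t ∈ Icc (0 : ℝ) L, dist (f s) (f t) = |s - t|)
    (hp : p ∈ Icc 0 L) (hq : q ∈ Icc 0 L) (hfar : ∀ w ∈ uIcc p q, C ≤ infDist (f w) U)
    {x y : Y} (hx : x ∈ projSet U (f p)) (hy : y ∈ projSet U (f q)) : dist x y ≤ C := by
  wlog hpq : p ≤ q generalizing p q x y
  · rw [dist_comm]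
    exact this hq hp (uIcc_comm p q ▸ hfar) hy hx (le_of_not_ge hpq)
  rw [uIcc_of_le hpq] at hfar
  have hbound := hU _ _ _ (isGeodesicIn_image_Icc hiso hp hq hpq)
    (by rintro _ ⟨w, hw, rfl⟩; exact hfar w hw)
  rw [← edist_le_ofReal hC]
  exact (edist_le_ediam_of_mem (mem_biUnion (mem_image_of_mem f (left_mem_Icc.2 hpq)) hx)
    (mem_biUnion (mem_image_of_mem f (right_mem_Icc.2 hpq)) hy)).trans hbound

variable [ProperSpace Y]

theorem dist_le_infDist_add_infDist (hU : IsContractingSet C U) (hC : 0 ≤ C)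
    (hUcl : IsClosed U) (hne : U.Nonempty)
    (hiso : ∀ s ∈ Icc (0 : ℝ) L, ∀ t ∈ Icc (0 : ℝ) L, dist (f s) (f t) = |s - t|)
    (hp : p ∈ Icc 0 L) (hq : q ∈ Icc 0 L) (hfar : ∀ w ∈ uIcc p q, C ≤ infDist (f w) U) :
    dist (f p) (f q) ≤ infDist (f p) U + C + infDist (f q) U := by
  obtain ⟨x, hx⟩ := projSet_nonempty hUcl hne (f p)
  obtain ⟨y, hy⟩ := projSet_nonempty hUcl hne (f q)
  calc dist (f p) (f q) ≤ dist (f p) x + dist x y + dist y (f q) := dist_triangle4 _ _ _ _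
    _ ≤ infDist (f p) U + C + infDist (f q) U := by
      rw [hx.2, dist_comm y, hy.2]
      gcongr
      exact hU.dist_le_of_forall_le_infDist hC hiso hp hq hfar hx hy

theorem exists_mem_cthickening (hU : IsContractingSet C U) (hC : 0 ≤ C)
    (hUcl : IsClosed U) (hne : U.Nonempty)
    (hiso : ∀ s ∈ Icc (0 : ℝ) L, ∀ t ∈ Icc (0 : ℝ) L, dist (f s) (f t) = |s - t|)
    (hp : p ∈ Icc 0 L) (hq : q ∈ Icc 0 L) {r : ℝ} (hfp : infDist (f p) U ≤ r)
    (hfq : infDist (f q) U ≤ r) (hlong : 2 * r + C < dist (f p) (f q)) :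
    ∃ w ∈ uIcc p q, f w ∈ cthickening C U := by
  by_contra! hfar
  have := hU.dist_le_infDist_add_infDist hC hUcl hne hiso hp hq fun w hw =>
    le_of_not_ge fun h => hfar w hw ((mem_cthickening_iff_infDist_le hC hne).2 h)
  linarith

theorem dist_projSet_le_two_mul (hU : IsContractingSet C U) (hC : 0 ≤ C)
    (hUcl : IsClosed U) (hne : U.Nonempty)
    (hiso : ∀ s ∈ Icc (0 : ℝ) L, ∀ t ∈ Icc (0 : ℝ) L, dist (f s) (f t) = |s - t|)
    (hp : p ∈ Icc 0 L) (hq : q ∈ Icc 0 L)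
    (hfar : ∀ w ∈ uIcc p q, w ≠ q → f w ∉ cthickening C U) (hfq : f q ∈ cthickening C U)
    {x : Y} (hx : x ∈ projSet U (f p)) : dist x (f q) ≤ 2 * C := by
  have hq_near := (mem_cthickening_iff_infDist_le hC hne).1 hfq
  rcases eq_or_ne p q with rfl | hpq
  · rw [dist_comm, hx.2]
    linarith
  obtain ⟨y, hy⟩ := projSet_nonempty hUcl hne (f q)
  have hxy := hU.dist_le_of_forall_le_infDist hC hiso hp hq
    (le_infDist_of_forall_ne_notMem_cthickening hiso hne hp hq hpq hfar) hx hy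
  calc dist x (f q) ≤ dist x y + dist y (f q) := dist_triangle _ _ _
    _ ≤ 2 * C := by rw [dist_comm y, hy.2]; linarith

theorem dist_projSet_le_before_entry (hU : IsContractingSet C U) (hC : 0 ≤ C)
    (hUcl : IsClosed U) (hne : U.Nonempty)
    (hiso : ∀ s ∈ Icc (0 : ℝ) L, ∀ t ∈ Icc (0 : ℝ) L, dist (f s) (f t) = |s - t|)
    (hp : p ∈ Icc 0 L) (hu : u ∈ Icc 0 L) (hpu : p ≤ u) (hfu : f u ∈ cthickening C U)
    (hentry : ∀ w ∈ Icc 0 L, f w ∈ cthickening C U → u ≤ w) :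
    ∀ x ∈ projSet U (f p), dist x (f u) ≤ 2 * C := by
  refine fun x => hU.dist_projSet_le_two_mul hC hUcl hne hiso hp hu (fun w hw hwu hfw => ?_) hfu
  rw [uIcc_of_le hpu] at hw
  exact hwu (hw.2.antisymm (hentry w (Icc_subset_Icc hp.1 hu.2 hw) hfw))

theorem dist_projSet_le_after_exit (hU : IsContractingSet C U) (hC : 0 ≤ C)
    (hUcl : IsClosed U) (hne : U.Nonempty)
    (hiso : ∀ s ∈ Icc (0 : ℝ) L, ∀ t ∈ Icc (0 : ℝ) L, dist (f s) (f t) = |s - t|)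
    (hp : p ∈ Icc 0 L) (hv : v ∈ Icc 0 L) (hvp : v ≤ p) (hfv : f v ∈ cthickening C U)
    (hexit : ∀ w ∈ Icc 0 L, f w ∈ cthickening C U → w ≤ v) :
    ∀ x ∈ projSet U (f p), dist x (f v) ≤ 2 * C := by
  refine fun x => hU.dist_projSet_le_two_mul hC hUcl hne hiso hp hv (fun w hw hwv hfw => ?_) hfv
  rw [uIcc_of_ge hvp] at hw
  exact hwv ((hexit w (Icc_subset_Icc hv.1 hp.2 hw) hfw).antisymm hw.1)

theorem exists_entry_exit (hU : IsContractingSet C U) (hC : 0 ≤ C)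
    (hUcl : IsClosed U) (hne : U.Nonempty)
    (hiso : ∀ s ∈ Icc (0 : ℝ) L, ∀ t ∈ Icc (0 : ℝ) L, dist (f s) (f t) = |s - t|)
    {s t r : ℝ} (hs : s ∈ Icc 0 L) (ht : t ∈ Icc 0 L) (hst : s ≤ t)
    (hsr : infDist (f s) U ≤ r) (htr : infDist (f t) U ≤ r) (hlong : 2 * r + C < t - s)
    (hinside : ∀ w ∈ Icc 0 L, f w ∈ cthickening C U → w ∈ Icc s t) :
    ∃ u ∈ Icc 0 L, ∃ v ∈ Icc 0 L, f u ∈ cthickening C U ∧ f v ∈ cthickening C U ∧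
      (∀ w ∈ Icc 0 L, f w ∈ cthickening C U → u ≤ w ∧ w ≤ v) ∧
      u - s ≤ r + 2 * C ∧ t - v ≤ r + 2 * C ∧
      ∀ x ∈ projSet U (f 0), ∀ y ∈ projSet U (f L), v - u ≤ dist x y + 4 * C := by
  obtain ⟨w, hw, hfw⟩ := hU.exists_mem_cthickening hC hUcl hne hiso hs ht hsr htr
    (by rw [dist_eq_sub_of_dist_eq_abs hiso hs ht hst]; exact hlong)
  obtain ⟨u, hu, v, hv, hfu, hfv, hbound⟩ := exists_first_last_mem_preimage
    (continuousOn_of_dist_eq_abs hiso) isClosed_cthickening ⟨w, uIcc_subset_Icc hs ht hw, hfw⟩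
  have hfirst : ∀ w ∈ Icc 0 L, f w ∈ cthickening C U → u ≤ w := fun w hw hfw =>
    (hbound w hw hfw).1
  have hlast : ∀ w ∈ Icc 0 L, f w ∈ cthickening C U → w ≤ v := fun w hw hfw =>
    (hbound w hw hfw).2
  have hL : 0 ≤ L := hs.1.trans hs.2
  refine ⟨u, hu, v, hv, hfu, hfv, hbound, ?_, ?_, fun x hx y hy => ?_⟩
  · rw [← dist_eq_sub_of_dist_eq_abs hiso hs hu (hinside u hu hfu).1]
    linarith [dist_le_infDist_add hUcl hne
      (hU.dist_projSet_le_before_entry hC hUcl hne hiso hs hu (hinside u hu hfu).1 hfu hfirst)]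
  · rw [← dist_eq_sub_of_dist_eq_abs hiso hv ht (hinside v hv hfv).2, dist_comm]
    linarith [dist_le_infDist_add hUcl hne
      (hU.dist_projSet_le_after_exit hC hUcl hne hiso ht hv (hinside v hv hfv).2 hfv hlast)]
  · have hxu := hU.dist_projSet_le_before_entry hC hUcl hne hiso (left_mem_Icc.2 hL) hu hu.1
      hfu hfirst x hx
    have hyv := hU.dist_projSet_le_after_exit hC hUcl hne hiso (right_mem_Icc.2 hL) hv hv.2
      hfv hlast y hy
    rw [← dist_eq_sub_of_dist_eq_abs hiso hu hv (hbound u hu hfu).2]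
    linarith [dist_triangle4 (f u) x y (f v), dist_comm (f u) x, dist_comm y (f v)]

end IsContractingSet

end Contracting

theorem statement5_general {Y : Type*} [MetricSpace Y] [ProperSpace Y]
    (C r : ℝ) (hC : 1 ≤ C) (hr : 100 * C ≤ r)
    (U : Set Y) (hUcl : IsClosed U) (hUcon : IsContractingSet C U)
    (a b : Y) (f : ℝ → Y) (hf0 : f 0 = a) (hfl : f (dist a b) = b)
    (hiso : ∀ s ∈ Set.Icc (0 : ℝ) (dist a b), ∀ t ∈ Set.Icc (0 : ℝ) (dist a b),
      dist (f s) (f t) = |s - t|)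
    (α : Set Y) (hα : α = f '' Set.Icc (0 : ℝ) (dist a b))
    (hbig : ENNReal.ofReal (3 * r) < EMetric.diam (Metric.cthickening r U ∩ α))
    (s t : ℝ) (hs : s ∈ Set.Icc (0 : ℝ) (dist a b)) (ht : t ∈ Set.Icc (0 : ℝ) (dist a b))
    (hst : s ≤ t)
    (hsmem : f s ∈ Metric.cthickening r U) (htmem : f t ∈ Metric.cthickening r U)
    (hmax : ENNReal.ofReal (dist (f s) (f t)) = EMetric.diam (Metric.cthickening r U ∩ α)) :
    (∃ u ∈ Set.Icc (0 : ℝ) (dist a b), ∃ v ∈ Set.Icc (0 : ℝ) (dist a b), u ≤ v ∧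
      f u ∈ Metric.cthickening C U ∧ f v ∈ Metric.cthickening C U ∧
      (∀ w ∈ Set.Icc (0 : ℝ) (dist a b), f w ∈ Metric.cthickening C U → u ≤ w ∧ w ≤ v) ∧
      dist (f u) (f s) ≤ 3 * r / 2 ∧ dist (f v) (f t) ≤ 3 * r / 2) ∧
    EMetric.diam (Metric.cthickening r U ∩ α) ≤
      EMetric.diam (Metric.cthickening C U ∩ α) + ENNReal.ofReal (3 * r) ∧
    EMetric.diam (Metric.cthickening r U ∩ α) ≤ projDist U a b + ENNReal.ofReal (4 * r) := by
  set L := dist a b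
  have hC0 : 0 ≤ C := by linarith
  have hne : U.Nonempty := by
    by_contra! hU
    simp [hU] at hsmem
  have hdiam : ediam (cthickening r U ∩ α) = ENNReal.ofReal (t - s) := by
    rw [dist_eq_sub_of_dist_eq_abs hiso hs ht hst] at hmax
    exact hmax.symm
  have hlong : 3 * r < t - s :=
    (ENNReal.ofReal_lt_ofReal_iff_of_nonneg (by linarith)).1 (hbig.trans_eq hdiam)
  have hmemα : ∀ w ∈ Icc 0 L, f w ∈ α := fun w hw => hα ▸ mem_image_of_mem f hw
  have hinside : ∀ w ∈ Icc 0 L, f w ∈ cthickening C U → w ∈ Icc s t := fun w hw hfw =>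
    mem_Icc_of_ediam_le hiso hs ht hw hst (A := cthickening r U ∩ α) ⟨hsmem, hmemα s hs⟩
      ⟨htmem, hmemα t ht⟩ ⟨cthickening_mono (by linarith) U hfw, hmemα w hw⟩ hdiam.le
  obtain ⟨u, hu, v, hv, hfu, hfv, hbound, hentry, hexit, hproj⟩ :=
    hUcon.exists_entry_exit hC0 hUcl hne hiso hs ht hst
      ((mem_cthickening_iff_infDist_le (by linarith) hne).1 hsmem)
      ((mem_cthickening_iff_infDist_le (by linarith) hne).1 htmem) (by linarith) hinside
  have huv := (hbound u hu hfu).2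
  refine ⟨⟨u, hu, v, hv, huv, hfu, hfv, hbound, ?_, ?_⟩, ?_, ?_⟩
  · rw [dist_comm, dist_eq_sub_of_dist_eq_abs hiso hs hu (hinside u hu hfu).1]
    linarith
  · rw [dist_eq_sub_of_dist_eq_abs hiso hv ht (hinside v hv hfv).2]
    linarith
  · exact hdiam.le.trans (ofReal_le_ediam_add ⟨hfu, hmemα u hu⟩ ⟨hfv, hmemα v hv⟩
      (by linarith [dist_eq_sub_of_dist_eq_abs hiso hu hv huv]))
  · obtain ⟨x, hx⟩ := projSet_nonempty hUcl hne a
    obtain ⟨y, hy⟩ := projSet_nonempty hUcl hne b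
    exact hdiam.le.trans (ofReal_le_ediam_add (mem_union_left _ hx) (mem_union_right _ hy)
      (by linarith [hproj x (hf0 ▸ hx) y (hfl ▸ hy)]))

/-- entry/exit points of a geodesic in the `C`-neighborhood of a
contracting set, compared with its entry/exit points in the `r`-neighborhood. -/
theorem statement5 {Y : Type*} [MetricSpace Y] [ProperSpace Y]
    (hY : GeodesicSpace Y) (C r : ℝ) (hC : 1 ≤ C) (hr : 100 * C ≤ r)
    (U : Set Y) (hUcl : IsClosed U) (hUcon : IsContractingSet C U)
    (a b : Y) (f : ℝ → Y) (hf0 : f 0 = a) (hfl : f (dist a b) = b)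
    (hiso : ∀ s ∈ Set.Icc (0 : ℝ) (dist a b), ∀ t ∈ Set.Icc (0 : ℝ) (dist a b),
      dist (f s) (f t) = |s - t|)
    (α : Set Y) (hα : α = f '' Set.Icc (0 : ℝ) (dist a b))
    (hbig : ENNReal.ofReal (3 * r) < EMetric.diam (Metric.cthickening r U ∩ α))
    (s t : ℝ) (hs : s ∈ Set.Icc (0 : ℝ) (dist a b)) (ht : t ∈ Set.Icc (0 : ℝ) (dist a b))
    (hst : s ≤ t)
    (hsmem : f s ∈ Metric.cthickening r U) (htmem : f t ∈ Metric.cthickening r U)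
    (hmax : ENNReal.ofReal (dist (f s) (f t)) = EMetric.diam (Metric.cthickening r U ∩ α)) :
    (∃ u ∈ Set.Icc (0 : ℝ) (dist a b), ∃ v ∈ Set.Icc (0 : ℝ) (dist a b), u ≤ v ∧
      f u ∈ Metric.cthickening C U ∧ f v ∈ Metric.cthickening C U ∧
      (∀ w ∈ Set.Icc (0 : ℝ) (dist a b), f w ∈ Metric.cthickening C U → u ≤ w ∧ w ≤ v) ∧
      dist (f u) (f s) ≤ 3 * r / 2 ∧ dist (f v) (f t) ≤ 3 * r / 2) ∧
    EMetric.diam (Metric.cthickening r U ∩ α) ≤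
      EMetric.diam (Metric.cthickening C U ∩ α) + ENNReal.ofReal (3 * r) ∧
    EMetric.diam (Metric.cthickening r U ∩ α) ≤ projDist U a b + ENNReal.ofReal (4 * r) :=
  statement5_general C r hC hr U hUcl hUcon a b f hf0 hfl hiso α hα hbig s t hs ht hst hsmem htmem
    hmax

end ConfDyn
end
end
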